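/- In the setting where the constants satisfy (gs), (fs), (rg), (YB) and the eight crossing relations, R is invertible as an N²×N² matrix, and the functionals l^{±,i}_j on A_{Rgf} are well defined, the following relations hold in the dual: for every u ∈ A_{Rgf}, writing Δ(u) = Σ u₍₁₎⊗u₍₂₎ for the comultiplication Δ(t^i_j) = t^i_k⊗t^k_j of A_{Rgf}, one has for both signs ε ∈ {+,−}: R^{ij}_{kl} l^{ε,l}_n(u₍₁₎) l^{ε,k}_m(u₍₂₎) = l^{ε,i}_k(u₍₁₎) l^{ε,j}_l(u₍₂₎) R^{kl}_{mn}, and the mixed relation R^{ij}_{kl} l^{+,l}_n(u₍₁₎) l^{−,k}_m(u₍₂₎) = l^{−,i}_k(u₍₁₎) l^{+,j}_l(u₍₂₎) R^{kl}_{mn}, for all i, j, m, n. -/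
import Mathlib


open TensorProduct
/-- The defining relations of the FRT-type algebra `A_{Rgf}`:
(RTT), (TTG), (TGC), (TTF) and (TFC), on the free algebra on the generators `t^i_j`. -/
inductive ARgfRel (N : ℕ) (R : Fin N → Fin N → Fin N → Fin N → ℂ)
    (g gt : Fin N → Fin N → ℂ) (f ft : Fin N → Fin N → Fin N → ℂ) :
    FreeAlgebra ℂ (Fin N × Fin N) → FreeAlgebra ℂ (Fin N × Fin N) → Prop
  | rtt (i j m n : Fin N) : ARgfRel N R g gt f ft
      (∑ k, ∑ l, R i j k l • (FreeAlgebra.ι ℂ (k, m) * FreeAlgebra.ι ℂ (l, n)))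
      (∑ k, ∑ l, R k l m n • (FreeAlgebra.ι ℂ (j, l) * FreeAlgebra.ι ℂ (i, k)))
  | ttg (i j : Fin N) : ARgfRel N R g gt f ft
      (algebraMap ℂ _ (g i j))
      (∑ k, ∑ l, g k l • (FreeAlgebra.ι ℂ (j, l) * FreeAlgebra.ι ℂ (i, k)))
  | tgc (m n : Fin N) : ARgfRel N R g gt f ft
      (∑ k, ∑ l, gt k l • (FreeAlgebra.ι ℂ (k, m) * FreeAlgebra.ι ℂ (l, n)))
      (algebraMap ℂ _ (gt m n))
  | ttf (i j m : Fin N) : ARgfRel N R g gt f ft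
      (∑ k, f i j k • FreeAlgebra.ι ℂ (k, m))
      (∑ k, ∑ l, f k l m • (FreeAlgebra.ι ℂ (j, l) * FreeAlgebra.ι ℂ (i, k)))
  | tfc (j m n : Fin N) : ARgfRel N R g gt f ft
      (∑ k, ∑ l, ft j k l • (FreeAlgebra.ι ℂ (k, m) * FreeAlgebra.ι ℂ (l, n)))
      (∑ l, ft l m n • FreeAlgebra.ι ℂ (j, l))

/-- The FRT-type algebra `A_{Rgf}`: the quotient of the free algebra on the `t^i_j`
by the relations above. -/
abbrev ARgf (N : ℕ) (R : Fin N → Fin N → Fin N → Fin N → ℂ)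
    (g gt : Fin N → Fin N → ℂ) (f ft : Fin N → Fin N → Fin N → ℂ) : Type :=
  RingQuot (ARgfRel N R g gt f ft)

/-- The generator `t^i_j` of `A_{Rgf}`. -/
noncomputable def tgen (N : ℕ) (R : Fin N → Fin N → Fin N → Fin N → ℂ)
    (g gt : Fin N → Fin N → ℂ) (f ft : Fin N → Fin N → Fin N → ℂ) (i j : Fin N) :
    ARgf N R g gt f ft :=
  RingQuot.mkAlgHom ℂ (ARgfRel N R g gt f ft) (FreeAlgebra.ι ℂ (i, j))


/-- Pairing of two linear functionals against an element of `H ⊗ H`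
(Sweedler-style: `sw φ ψ (Δ x) = ∑ φ(x₍₁₎) ψ(x₍₂₎)`). -/
noncomputable def sw {H : Type*} [Ring H] [Algebra ℂ H] (φ ψ : H →ₗ[ℂ] ℂ) :
    H ⊗[ℂ] H →ₗ[ℂ] ℂ :=
  TensorProduct.lift ((LinearMap.mul ℂ ℂ).compl₁₂ φ ψ)

/-- The `(k,m)` matrix entry of an algebra homomorphism into `Mat_N(ℂ)`,
as a linear functional. -/
noncomputable def entryF {A : Type*} [Ring A] [Algebra ℂ A] {N : ℕ}
    (L : A →ₐ[ℂ] Matrix (Fin N) (Fin N) ℂ) (k m : Fin N) : A →ₗ[ℂ] ℂ where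
  toFun a := L a k m
  map_add' a b := by simp [Matrix.add_apply]
  map_smul' c a := by simp [Matrix.smul_apply, smul_eq_mul]

-- Auxiliary lemmas
lemma entryF_apply {A : Type*} [Ring A] [Algebra ℂ A] {N : ℕ}
    (L : A →ₐ[ℂ] Matrix (Fin N) (Fin N) ℂ) (k m : Fin N) (a : A) :
    entryF L k m a = L a k m := rfl

lemma sw_tmul {H : Type*} [Ring H] [Algebra ℂ H] (φ ψ : H →ₗ[ℂ] ℂ) (a b : H) :
    sw φ ψ (a ⊗ₜ[ℂ] b) = φ a * ψ b := by
  simp [sw]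

lemma sw_mul {H : Type*} [Ring H] [Algebra ℂ H] {N : ℕ}
    (L1 L2 : H →ₐ[ℂ] Matrix (Fin N) (Fin N) ℂ) (x y : H ⊗[ℂ] H) (a c b d : Fin N) :
    sw (entryF L1 a c) (entryF L2 b d) (x * y)
      = ∑ p, ∑ q, sw (entryF L1 a p) (entryF L2 b q) x * sw (entryF L1 p c) (entryF L2 q d) y := by
  induction x using TensorProduct.induction_on with
  | zero => simp
  | tmul u1 u2 =>
    induction y using TensorProduct.induction_on with
    | zero => simp
    | tmul v1 v2 =>
      simp only [Algebra.TensorProduct.tmul_mul_tmul, sw_tmul, entryF_apply, map_mul,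
        Matrix.mul_apply]
      rw [Finset.sum_mul_sum]
      apply Finset.sum_congr rfl; intro p _
      apply Finset.sum_congr rfl; intro q _
      ring
    | add y1 y2 h1 h2 =>
      simp only [mul_add, map_add, h1, h2, ← Finset.sum_add_distrib, mul_add]
  | add x1 x2 h1 h2 =>
    simp only [add_mul, map_add, h1, h2, ← Finset.sum_add_distrib, add_mul]
section AmBm
variable {H : Type*} [Ring H] [Algebra ℂ H] {N : ℕ}

/-- `Am Δ L1 L2 u (k,l) (m,n) = ∑ (L1 u₍₁₎) l n * (L2 u₍₂₎) k m`. -/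
noncomputable def Am (Δ : H →ₐ[ℂ] H ⊗[ℂ] H)
    (L1 L2 : H →ₐ[ℂ] Matrix (Fin N) (Fin N) ℂ) (u : H) :
    Matrix (Fin N × Fin N) (Fin N × Fin N) ℂ :=
  Matrix.of fun p q => sw (entryF L1 p.2 q.2) (entryF L2 p.1 q.1) (Δ u)

/-- `Bm Δ L1 L2 u (i,j) (k,l) = ∑ (L1 u₍₁₎) i k * (L2 u₍₂₎) j l`. -/
noncomputable def Bm (Δ : H →ₐ[ℂ] H ⊗[ℂ] H)
    (L1 L2 : H →ₐ[ℂ] Matrix (Fin N) (Fin N) ℂ) (u : H) :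
    Matrix (Fin N × Fin N) (Fin N × Fin N) ℂ :=
  Matrix.of fun p q => sw (entryF L1 p.1 q.1) (entryF L2 p.2 q.2) (Δ u)

variable (Δ : H →ₐ[ℂ] H ⊗[ℂ] H) (L1 L2 : H →ₐ[ℂ] Matrix (Fin N) (Fin N) ℂ)

lemma Am_mul (u v : H) : Am Δ L1 L2 (u * v) = Am Δ L1 L2 u * Am Δ L1 L2 v := by
  ext ⟨k, l⟩ ⟨m, n⟩
  simp only [Am, Matrix.of_apply, Matrix.mul_apply, map_mul, sw_mul, Fintype.sum_prod_type]
  rw [Finset.sum_comm]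

lemma Bm_mul (u v : H) : Bm Δ L1 L2 (u * v) = Bm Δ L1 L2 u * Bm Δ L1 L2 v := by
  ext ⟨k, l⟩ ⟨m, n⟩
  simp only [Bm, Matrix.of_apply, Matrix.mul_apply, map_mul, sw_mul, Fintype.sum_prod_type]

lemma Am_one : Am Δ L1 L2 1 = 1 := by
  ext ⟨k, l⟩ ⟨m, n⟩
  simp only [Am, Matrix.of_apply, map_one, Algebra.TensorProduct.one_def, sw_tmul,
    entryF_apply, Matrix.one_apply, Prod.ext_iff]
  by_cases h1 : l = n <;> by_cases h2 : k = m <;> simp [h1, h2]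

lemma Am_smul' (r : ℂ) (u : H) : Am Δ L1 L2 (r • u) = r • Am Δ L1 L2 u := by
  ext ⟨k, l⟩ ⟨m, n⟩
  simp [Am, map_smul]

lemma Am_algebraMap (r : ℂ) : Am Δ L1 L2 (algebraMap ℂ H r) = r • 1 := by
  rw [show algebraMap ℂ H r = r • (1 : H) by simp [Algebra.smul_def], Am_smul', Am_one]

lemma Am_add (u v : H) : Am Δ L1 L2 (u + v) = Am Δ L1 L2 u + Am Δ L1 L2 v := by
  ext ⟨k, l⟩ ⟨m, n⟩
  simp [Am, map_add]

lemma Bm_smul' (r : ℂ) (u : H) : Bm Δ L1 L2 (r • u) = r • Bm Δ L1 L2 u := by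
  ext ⟨k, l⟩ ⟨m, n⟩
  simp [Bm, map_smul]

lemma Bm_one : Bm Δ L1 L2 1 = 1 := by
  ext ⟨k, l⟩ ⟨m, n⟩
  simp only [Bm, Matrix.of_apply, map_one, Algebra.TensorProduct.one_def, sw_tmul,
    entryF_apply, Matrix.one_apply, Prod.ext_iff]
  by_cases h1 : l = n <;> by_cases h2 : k = m <;> simp [h1, h2]

lemma Bm_algebraMap (r : ℂ) : Bm Δ L1 L2 (algebraMap ℂ H r) = r • 1 := by
  rw [show algebraMap ℂ H r = r • (1 : H) by simp [Algebra.smul_def], Bm_smul', Bm_one]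

lemma Bm_add (u v : H) : Bm Δ L1 L2 (u + v) = Bm Δ L1 L2 u + Bm Δ L1 L2 v := by
  ext ⟨k, l⟩ ⟨m, n⟩
  simp [Bm, map_add]

lemma Am_smul (r : ℂ) (u : H) : Am Δ L1 L2 (r • u) = r • Am Δ L1 L2 u := by
  ext ⟨k, l⟩ ⟨m, n⟩
  simp [Am, map_smul]

lemma Bm_smul (r : ℂ) (u : H) : Bm Δ L1 L2 (r • u) = r • Bm Δ L1 L2 u := by
  ext ⟨k, l⟩ ⟨m, n⟩
  simp [Bm, map_smul]

end AmBm
section Legs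
variable (N : ℕ)

def M12 (Q : Fin N → Fin N → Fin N → Fin N → ℂ) :
    Matrix (Fin N × Fin N × Fin N) (Fin N × Fin N × Fin N) ℂ :=
  Matrix.of fun x y => Q x.1 x.2.1 y.1 y.2.1 * (if x.2.2 = y.2.2 then 1 else 0)

def M13 (Q : Fin N → Fin N → Fin N → Fin N → ℂ) :
    Matrix (Fin N × Fin N × Fin N) (Fin N × Fin N × Fin N) ℂ :=
  Matrix.of fun x y => Q x.1 x.2.2 y.1 y.2.2 * (if x.2.1 = y.2.1 then 1 else 0)

def M23 (Q : Fin N → Fin N → Fin N → Fin N → ℂ) :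
    Matrix (Fin N × Fin N × Fin N) (Fin N × Fin N × Fin N) ℂ :=
  Matrix.of fun x y => Q x.2.1 x.2.2 y.2.1 y.2.2 * (if x.1 = y.1 then 1 else 0)

variable {N}

lemma M12_mul_apply (Q : Fin N → Fin N → Fin N → Fin N → ℂ)
    (A : Matrix (Fin N × Fin N × Fin N) (Fin N × Fin N × Fin N) ℂ)
    (x z : Fin N × Fin N × Fin N) :
    (M12 N Q * A) x z = ∑ k, ∑ l, Q x.1 x.2.1 k l * A (k, l, x.2.2) z := by
  simp [Matrix.mul_apply, M12, Fintype.sum_prod_type, mul_ite, ite_mul, mul_assoc]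

lemma M13_mul_apply (Q : Fin N → Fin N → Fin N → Fin N → ℂ)
    (A : Matrix (Fin N × Fin N × Fin N) (Fin N × Fin N × Fin N) ℂ)
    (x z : Fin N × Fin N × Fin N) :
    (M13 N Q * A) x z = ∑ k, ∑ p, Q x.1 x.2.2 k p * A (k, x.2.1, p) z := by
  simp [Matrix.mul_apply, M13, Fintype.sum_prod_type, mul_ite, ite_mul, mul_assoc]

lemma M23_mul_apply (Q : Fin N → Fin N → Fin N → Fin N → ℂ)
    (A : Matrix (Fin N × Fin N × Fin N) (Fin N × Fin N × Fin N) ℂ)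
    (x z : Fin N × Fin N × Fin N) :
    (M23 N Q * A) x z = ∑ l, ∑ p, Q x.2.1 x.2.2 l p * A (x.1, l, p) z := by
  simp [Matrix.mul_apply, M23, Fintype.sum_prod_type, mul_ite, ite_mul, mul_assoc]

lemma M12_apply (Q : Fin N → Fin N → Fin N → Fin N → ℂ) (x z : Fin N × Fin N × Fin N) :
    M12 N Q x z = Q x.1 x.2.1 z.1 z.2.1 * (if x.2.2 = z.2.2 then 1 else 0) := rfl

lemma M13_apply (Q : Fin N → Fin N → Fin N → Fin N → ℂ) (x z : Fin N × Fin N × Fin N) :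
    M13 N Q x z = Q x.1 x.2.2 z.1 z.2.2 * (if x.2.1 = z.2.1 then 1 else 0) := rfl

lemma M23_apply (Q : Fin N → Fin N → Fin N → Fin N → ℂ) (x z : Fin N × Fin N × Fin N) :
    M23 N Q x z = Q x.2.1 x.2.2 z.2.1 z.2.2 * (if x.1 = z.1 then 1 else 0) := rfl

end Legs
section Trips
variable {N : ℕ}

lemma trip_A (Q1 Q2 Q3 : Fin N → Fin N → Fin N → Fin N → ℂ) (i j a m n b : Fin N) :
    (M12 N Q1 * M23 N Q2 * M13 N Q3) (i, j, a) (m, n, b)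
      = ∑ k, ∑ l, ∑ p, Q1 i j k l * (Q2 l a n p * Q3 k p m b) := by
  rw [Matrix.mul_assoc]
  simp only [M12_mul_apply, M23_mul_apply, M13_apply, Finset.mul_sum]
  apply Finset.sum_congr rfl; intro k _
  apply Finset.sum_congr rfl; intro l _
  rw [Finset.sum_comm]
  simp [mul_ite, ite_mul, Finset.mul_sum]

lemma trip_B (Q1 Q2 Q3 : Fin N → Fin N → Fin N → Fin N → ℂ) (i j a m n b : Fin N) :
    (M13 N Q1 * M23 N Q2 * M12 N Q3) (i, j, a) (m, n, b)
      = ∑ k, ∑ p, ∑ l, Q1 i a k p * (Q2 j p l b * Q3 k l m n) := by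
  rw [Matrix.mul_assoc]
  simp only [M13_mul_apply, M23_mul_apply, M12_apply, Finset.mul_sum]
  apply Finset.sum_congr rfl; intro k _
  apply Finset.sum_congr rfl; intro p _
  apply Finset.sum_congr rfl; intro l _
  simp [mul_ite, ite_mul, Finset.mul_sum]

lemma trip_C (Q1 Q2 Q3 : Fin N → Fin N → Fin N → Fin N → ℂ) (i j a m n b : Fin N) :
    (M12 N Q1 * M13 N Q2 * M23 N Q3) (i, j, a) (m, n, b)
      = ∑ k, ∑ l, ∑ p, Q1 i j k l * (Q2 k a m p * Q3 l p n b) := by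
  rw [Matrix.mul_assoc]
  simp only [M12_mul_apply, M13_mul_apply, M23_apply, Finset.mul_sum]
  apply Finset.sum_congr rfl; intro k _
  apply Finset.sum_congr rfl; intro l _
  rw [Finset.sum_comm]
  simp [mul_ite, ite_mul, Finset.mul_sum]

lemma trip_D (Q1 Q2 Q3 : Fin N → Fin N → Fin N → Fin N → ℂ) (i j a m n b : Fin N) :
    (M23 N Q1 * M13 N Q2 * M12 N Q3) (i, j, a) (m, n, b)
      = ∑ l, ∑ p, ∑ k, Q1 j a l p * (Q2 i p k b * Q3 k l m n) := by
  rw [Matrix.mul_assoc]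
  simp only [M23_mul_apply, M13_mul_apply, M12_apply, Finset.mul_sum]
  apply Finset.sum_congr rfl; intro l _
  apply Finset.sum_congr rfl; intro p _
  apply Finset.sum_congr rfl; intro k _
  simp [mul_ite, ite_mul, Finset.mul_sum]

lemma trip_E (Q1 Q2 Q3 : Fin N → Fin N → Fin N → Fin N → ℂ) (i j a m n b : Fin N) :
    (M13 N Q1 * M12 N Q2 * M23 N Q3) (i, j, a) (m, n, b)
      = ∑ k, ∑ p, ∑ v, Q1 i a k p * (Q2 k j m v * Q3 v p n b) := by
  rw [Matrix.mul_assoc]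
  simp only [M13_mul_apply, M12_mul_apply, M23_apply, Finset.mul_sum]
  apply Finset.sum_congr rfl; intro k _
  apply Finset.sum_congr rfl; intro p _
  rw [Finset.sum_comm]
  simp [mul_ite, ite_mul, Finset.mul_sum]

lemma trip_F (Q1 Q2 Q3 : Fin N → Fin N → Fin N → Fin N → ℂ) (i j a m n b : Fin N) :
    (M23 N Q1 * M12 N Q2 * M13 N Q3) (i, j, a) (m, n, b)
      = ∑ l, ∑ p, ∑ k, Q1 j a l p * (Q2 i l k n * Q3 k p m b) := by
  rw [Matrix.mul_assoc]
  simp only [M23_mul_apply, M12_mul_apply, M13_apply, Finset.mul_sum]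
  apply Finset.sum_congr rfl; intro l _
  apply Finset.sum_congr rfl; intro p _
  apply Finset.sum_congr rfl; intro k _
  simp [mul_ite, ite_mul, Finset.mul_sum]

end Trips
section YB
variable {N : ℕ}

lemma sum3_rot (f : Fin N → Fin N → Fin N → ℂ) :
    ∑ a, ∑ b, ∑ c, f a b c = ∑ c, ∑ a, ∑ b, f a b c := by
  calc ∑ a, ∑ b, ∑ c, f a b c = ∑ a, ∑ c, ∑ b, f a b c :=
        Finset.sum_congr rfl fun _ _ => Finset.sum_comm
    _ = ∑ c, ∑ a, ∑ b, f a b c := Finset.sum_comm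

lemma sum3_swap13 (f : Fin N → Fin N → Fin N → ℂ) :
    ∑ a, ∑ b, ∑ c, f a b c = ∑ c, ∑ b, ∑ a, f a b c := by
  rw [sum3_rot]; exact Finset.sum_congr rfl fun _ _ => Finset.sum_comm

variable (R : Fin N → Fin N → Fin N → Fin N → ℂ)

lemma ybA
    (hYB : ∀ i₁ i₂ i₃ k₁ k₂ k₃ : Fin N,
      ∑ j₁, ∑ j₂, ∑ j₃, R i₁ i₂ j₁ j₂ * R j₁ i₃ k₁ j₃ * R j₂ j₃ k₂ k₃
        = ∑ j₁, ∑ j₂, ∑ j₃, R i₂ i₃ j₂ j₃ * R i₁ j₃ j₁ k₃ * R j₁ j₂ k₁ k₂) :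
    M12 N R * M23 N (fun i j k l => R j i l k) * M13 N (fun i j k l => R j i l k)
      = M13 N (fun i j k l => R j i l k) * M23 N (fun i j k l => R j i l k) * M12 N R := by
  ext ⟨i, j, a⟩ ⟨m, n, b⟩
  rw [trip_A, trip_B]
  have h := hYB a i j b m n
  conv_lhs => rw [sum3_rot]
  conv_rhs => rw [Finset.sum_comm]
  simpa [mul_assoc] using h.symm

lemma ybC
    (hYB : ∀ i₁ i₂ i₃ k₁ k₂ k₃ : Fin N,
      ∑ j₁, ∑ j₂, ∑ j₃, R i₁ i₂ j₁ j₂ * R j₁ i₃ k₁ j₃ * R j₂ j₃ k₂ k₃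
        = ∑ j₁, ∑ j₂, ∑ j₃, R i₂ i₃ j₂ j₃ * R i₁ j₃ j₁ k₃ * R j₁ j₂ k₁ k₂) :
    M12 N R * M13 N R * M23 N R = M23 N R * M13 N R * M12 N R := by
  ext ⟨i, j, a⟩ ⟨m, n, b⟩
  rw [trip_C, trip_D]
  have h := hYB i j a m n b
  conv_rhs => rw [sum3_rot]
  simpa [mul_assoc] using h

lemma ybE
    (hYB : ∀ i₁ i₂ i₃ k₁ k₂ k₃ : Fin N,
      ∑ j₁, ∑ j₂, ∑ j₃, R i₁ i₂ j₁ j₂ * R j₁ i₃ k₁ j₃ * R j₂ j₃ k₂ k₃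
        = ∑ j₁, ∑ j₂, ∑ j₃, R i₂ i₃ j₂ j₃ * R i₁ j₃ j₁ k₃ * R j₁ j₂ k₁ k₂) :
    M13 N R * M12 N R * M23 N (fun i j k l => R j i l k)
      = M23 N (fun i j k l => R j i l k) * M12 N R * M13 N R := by
  ext ⟨i, j, a⟩ ⟨m, n, b⟩
  rw [trip_E, trip_F]
  have h := hYB i a j m b n
  conv_rhs => rw [sum3_swap13]
  simpa [mul_assoc] using h

lemma M13_mul_M13 (Q1 Q2 : Fin N → Fin N → Fin N → Fin N → ℂ) :
    M13 N Q1 * M13 N Q2 = M13 N (fun i j k l => ∑ a, ∑ b, Q1 i j a b * Q2 a b k l) := by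
  ext x z
  rw [M13_mul_apply]
  simp [M13_apply, Finset.sum_mul, mul_assoc]

lemma M23_mul_M23 (Q1 Q2 : Fin N → Fin N → Fin N → Fin N → ℂ) :
    M23 N Q1 * M23 N Q2 = M23 N (fun i j k l => ∑ a, ∑ b, Q1 i j a b * Q2 a b k l) := by
  ext x z
  rw [M23_mul_apply]
  simp [M23_apply, Finset.sum_mul, mul_assoc]

lemma M13_id :
    M13 N (fun i k m p => (if i = m then (1 : ℂ) else 0) * (if k = p then 1 else 0)) = 1 := by
  ext ⟨i, j, a⟩ ⟨m, n, b⟩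
  simp only [M13_apply, Matrix.one_apply, Prod.ext_iff]
  by_cases h1 : i = m <;> by_cases h2 : a = b <;> by_cases h3 : j = n <;>
    simp [h1, h2, h3]

lemma M23_id :
    M23 N (fun i k m p => (if i = m then (1 : ℂ) else 0) * (if k = p then 1 else 0)) = 1 := by
  ext ⟨i, j, a⟩ ⟨m, n, b⟩
  simp only [M23_apply, Matrix.one_apply, Prod.ext_iff]
  by_cases h1 : i = m <;> by_cases h2 : a = b <;> by_cases h3 : j = n <;>
    simp [h1, h2, h3]

end YB

section Conj
variable {M : Type*} [Monoid M]

lemma conj_trick (A B C Bi Ci : M) (hB : B * Bi = 1) (hB' : Bi * B = 1)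
    (hC : C * Ci = 1) (hC' : Ci * C = 1) (h : A * C * B = B * C * A) :
    A * Bi * Ci = Ci * Bi * A := by
  have cB : ∀ X : M, B * (Bi * X) = X := fun X => by rw [← mul_assoc, hB, one_mul]
  have cB' : ∀ X : M, Bi * (B * X) = X := fun X => by rw [← mul_assoc, hB', one_mul]
  have cC' : ∀ X : M, Ci * (C * X) = X := fun X => by rw [← mul_assoc, hC', one_mul]
  have h' : A * (C * B) = B * (C * A) := by simpa [mul_assoc] using h
  have key : Ci * (Bi * A) = A * (Bi * Ci) := by
    calc Ci * (Bi * A)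
        = Ci * (Bi * (A * (C * (B * (Bi * Ci))))) := by rw [cB, hC, mul_one]
      _ = Ci * (Bi * ((A * (C * B)) * (Bi * Ci))) := by simp [mul_assoc]
      _ = Ci * (Bi * ((B * (C * A)) * (Bi * Ci))) := by rw [h']
      _ = Ci * (Bi * (B * (C * (A * (Bi * Ci))))) := by simp [mul_assoc]
      _ = Ci * (C * (A * (Bi * Ci))) := by rw [cB']
      _ = A * (Bi * Ci) := cC' _
  calc A * Bi * Ci = A * (Bi * Ci) := by rw [mul_assoc]
    _ = Ci * (Bi * A) := key.symm
    _ = Ci * Bi * A := by rw [mul_assoc]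

lemma conj_trick2 (A B C Ci : M) (hC : C * Ci = 1) (hC' : Ci * C = 1)
    (h : C * A * B = B * A * C) : A * B * Ci = Ci * B * A := by
  have cC' : ∀ X : M, Ci * (C * X) = X := fun X => by rw [← mul_assoc, hC', one_mul]
  have h' : C * (A * B) = B * (A * C) := by simpa [mul_assoc] using h
  have key : A * (B * Ci) = Ci * (B * A) := by
    calc A * (B * Ci) = Ci * (C * (A * (B * Ci))) := (cC' _).symm
      _ = Ci * ((C * (A * B)) * Ci) := by simp [mul_assoc]
      _ = Ci * ((B * (A * C)) * Ci) := by rw [h']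
      _ = Ci * (B * (A * (C * Ci))) := by simp [mul_assoc]
      _ = Ci * (B * A) := by rw [hC, mul_one]
  calc A * B * Ci = A * (B * Ci) := by rw [mul_assoc]
    _ = Ci * (B * A) := key
    _ = Ci * B * A := by rw [← mul_assoc]

end Conj
lemma gen_case {N : ℕ} (R S T U V : Fin N → Fin N → Fin N → Fin N → ℂ)
    (hmat : M12 N R * M23 N S * M13 N T = M13 N U * M23 N V * M12 N R)
    (i j m n a b : Fin N) :
    ∑ k, ∑ l, R i j k l * (∑ c, S l a n c * T k c m b)
      = ∑ k, ∑ l, (∑ c, U i a k c * V j c l b) * R k l m n := by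
  have h := congrFun (congrFun hmat (i, j, a)) (m, n, b)
  rw [trip_A, trip_B] at h
  calc ∑ k, ∑ l, R i j k l * (∑ c, S l a n c * T k c m b)
      = ∑ k, ∑ l, ∑ c, R i j k l * (S l a n c * T k c m b) := by
        simp [Finset.mul_sum]
    _ = ∑ k, ∑ p, ∑ l, U i a k p * (V j p l b * R k l m n) := h
    _ = ∑ k, ∑ l, (∑ c, U i a k c * V j c l b) * R k l m n := by
        refine Finset.sum_congr rfl fun k _ => ?_
        rw [Finset.sum_comm]
        simp [Finset.sum_mul, mul_assoc]

section Closure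
variable {H : Type*} [Ring H] [Algebra ℂ H] {N : ℕ}
  (Rh : Matrix (Fin N × Fin N) (Fin N × Fin N) ℂ)
  (Δ : H →ₐ[ℂ] H ⊗[ℂ] H) (L1 L2 L1' L2' : H →ₐ[ℂ] Matrix (Fin N) (Fin N) ℂ)

lemma closure_mul (u v : H)
    (hu : Rh * Am Δ L1 L2 u = Bm Δ L1' L2' u * Rh)
    (hv : Rh * Am Δ L1 L2 v = Bm Δ L1' L2' v * Rh) :
    Rh * Am Δ L1 L2 (u * v) = Bm Δ L1' L2' (u * v) * Rh := by
  calc Rh * Am Δ L1 L2 (u * v) = Rh * Am Δ L1 L2 u * Am Δ L1 L2 v := by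
        rw [Am_mul, Matrix.mul_assoc]
    _ = Bm Δ L1' L2' u * Rh * Am Δ L1 L2 v := by rw [hu]
    _ = Bm Δ L1' L2' u * (Bm Δ L1' L2' v * Rh) := by rw [Matrix.mul_assoc, hv]
    _ = Bm Δ L1' L2' (u * v) * Rh := by rw [Bm_mul, Matrix.mul_assoc]

lemma closure_add (u v : H)
    (hu : Rh * Am Δ L1 L2 u = Bm Δ L1' L2' u * Rh)
    (hv : Rh * Am Δ L1 L2 v = Bm Δ L1' L2' v * Rh) :
    Rh * Am Δ L1 L2 (u + v) = Bm Δ L1' L2' (u + v) * Rh := by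
  rw [Am_add, Bm_add, Matrix.mul_add, Matrix.add_mul, hu, hv]

lemma closure_algebraMap (r : ℂ) :
    Rh * Am Δ L1 L2 (algebraMap ℂ H r) = Bm Δ L1' L2' (algebraMap ℂ H r) * Rh := by
  rw [Am_algebraMap, Bm_algebraMap, Matrix.mul_smul, Matrix.smul_mul, Matrix.mul_one,
    Matrix.one_mul]

end Closure
/-- the functionals `l^{±,i}_j` on `A_{Rgf}` satisfy the RTT-type relations
(for each sign, and the mixed one) with respect to the comultiplication
`Δ(t^i_j) = t^i_k ⊗ t^k_j`. -/
theorem stmt15 (N : ℕ) (hN : 1 ≤ N)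
    (R : Fin N → Fin N → Fin N → Fin N → ℂ) (g gt : Fin N → Fin N → ℂ)
    (f ft : Fin N → Fin N → Fin N → ℂ)
    (hgs : ∀ i j : Fin N, (∑ k, g i k * gt j k = if i = j then (1 : ℂ) else 0)
      ∧ (∑ k, g k i * gt k j = if i = j then (1 : ℂ) else 0))
    (hfs : ∀ i j k : Fin N,
      (∑ n, ∑ l, ∑ m', g n i * f l m' n * gt l j * gt m' k = ft i j k)
      ∧ (∑ n, ∑ l, ∑ m', g i n * f l m' n * gt j l * gt k m' = ft i j k))
    (hrg : ∀ i j m' n : Fin N,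
      ∑ k, ∑ l, R i j k l * g k m' * g l n = ∑ k, ∑ l, g j l * g i k * R k l m' n)
    (hYB : ∀ i₁ i₂ i₃ k₁ k₂ k₃ : Fin N,
      ∑ j₁, ∑ j₂, ∑ j₃, R i₁ i₂ j₁ j₂ * R j₁ i₃ k₁ j₃ * R j₂ j₃ k₂ k₃
        = ∑ j₁, ∑ j₂, ∑ j₃, R i₂ i₃ j₂ j₃ * R i₁ j₃ j₁ k₃ * R j₁ j₂ k₁ k₂)
    (hc1 : ∀ i j k l : Fin N,
      g i j * (if k = l then (1 : ℂ) else 0) = ∑ n, ∑ p, ∑ m', R j k n p * R i p m' l * g m' n)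
    (hc2 : ∀ i j k l : Fin N,
      (if i = j then (1 : ℂ) else 0) * gt k l = ∑ m', ∑ n, ∑ p, gt m' n * R m' i k p * R n p l j)
    (hc3 : ∀ i j k l : Fin N,
      g i j * (if k = l then (1 : ℂ) else 0) = ∑ p, ∑ m', ∑ n, R k i p m' * R p j l n * g m' n)
    (hc4 : ∀ i j k l : Fin N,
      (if i = j then (1 : ℂ) else 0) * gt k l = ∑ m', ∑ n, ∑ p, gt m' n * R i n p l * R p m' j k)
    (hc5 : ∀ i j k l s : Fin N,
      ∑ p, f i j p * R p k s l = ∑ n, ∑ p, ∑ m', R j k n p * R i p m' l * f m' n s)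
    (hc6 : ∀ i j k l s : Fin N,
      ∑ p, R s i p j * ft p k l = ∑ m', ∑ n, ∑ p, ft s m' n * R m' i k p * R n p l j)
    (hc7 : ∀ i j k l s : Fin N,
      ∑ p, f i j p * R k p l s = ∑ p, ∑ m', ∑ n, R k i p m' * R p j l n * f m' n s)
    (hc8 : ∀ i j k l s : Fin N,
      ∑ p, R i s j p * ft p k l = ∑ m', ∑ n, ∑ p, ft s m' n * R i n p l * R p m' j k)
    (Rinv : Fin N → Fin N → Fin N → Fin N → ℂ)
    (hRinv : ∀ i j k l : Fin N,
      ∑ a, ∑ b, R i j a b * Rinv a b k l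
        = (if i = k then (1 : ℂ) else 0) * (if j = l then (1 : ℂ) else 0))
    (hRinv' : ∀ i j k l : Fin N,
      ∑ a, ∑ b, Rinv i j a b * R a b k l
        = (if i = k then (1 : ℂ) else 0) * (if j = l then (1 : ℂ) else 0))
    (Δ : ARgf N R g gt f ft →ₐ[ℂ] ARgf N R g gt f ft ⊗[ℂ] ARgf N R g gt f ft)
    (hΔ : ∀ i j : Fin N, Δ (tgen N R g gt f ft i j)
      = ∑ k, tgen N R g gt f ft i k ⊗ₜ[ℂ] tgen N R g gt f ft k j)
    (Lp Lm : ARgf N R g gt f ft →ₐ[ℂ] Matrix (Fin N) (Fin N) ℂ)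
    (hLp : ∀ i j : Fin N, Lp (tgen N R g gt f ft i j) = Matrix.of fun k m' => R i k j m')
    (hLm : ∀ i j : Fin N, Lm (tgen N R g gt f ft i j) = Matrix.of fun k m' => Rinv k i m' j) :
    ∀ (u : ARgf N R g gt f ft) (i j m' n : Fin N),
      (∑ k, ∑ l, R i j k l * sw (entryF Lp l n) (entryF Lp k m') (Δ u)
        = ∑ k, ∑ l, sw (entryF Lp i k) (entryF Lp j l) (Δ u) * R k l m' n)
      ∧ (∑ k, ∑ l, R i j k l * sw (entryF Lm l n) (entryF Lm k m') (Δ u)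
        = ∑ k, ∑ l, sw (entryF Lm i k) (entryF Lm j l) (Δ u) * R k l m' n)
      ∧ (∑ k, ∑ l, R i j k l * sw (entryF Lp l n) (entryF Lm k m') (Δ u)
        = ∑ k, ∑ l, sw (entryF Lm i k) (entryF Lp j l) (Δ u) * R k l m' n) := by

  classical
  set Rh : Matrix (Fin N × Fin N) (Fin N × Fin N) ℂ :=
    Matrix.of fun x y => R x.1 x.2 y.1 y.2 with hRh
  suffices key : ∀ u : ARgf N R g gt f ft,
      (Rh * Am Δ Lp Lp u = Bm Δ Lp Lp u * Rh) ∧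
      (Rh * Am Δ Lm Lm u = Bm Δ Lm Lm u * Rh) ∧
      (Rh * Am Δ Lp Lm u = Bm Δ Lm Lp u * Rh) by
    intro u i j m' n
    obtain ⟨h1, h2, h3⟩ := key u
    refine ⟨?_, ?_, ?_⟩
    · simpa [Matrix.mul_apply, Fintype.sum_prod_type, Am, Bm, hRh] using
        congrFun (congrFun h1 (i, j)) (m', n)
    · simpa [Matrix.mul_apply, Fintype.sum_prod_type, Am, Bm, hRh] using
        congrFun (congrFun h2 (i, j)) (m', n)
    · simpa [Matrix.mul_apply, Fintype.sum_prod_type, Am, Bm, hRh] using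
        congrFun (congrFun h3 (i, j)) (m', n)
  -- inverse leg matrices
  have hdel : (fun i' j' k' l' => ∑ a, ∑ b, R i' j' a b * Rinv a b k' l')
      = fun i' j' k' l' => (if i' = k' then (1 : ℂ) else 0) * (if j' = l' then 1 else 0) := by
    funext i' j' k' l'; exact hRinv i' j' k' l'
  have hdel' : (fun i' j' k' l' => ∑ a, ∑ b, Rinv i' j' a b * R a b k' l')
      = fun i' j' k' l' => (if i' = k' then (1 : ℂ) else 0) * (if j' = l' then 1 else 0) := by
    funext i' j' k' l'; exact hRinv' i' j' k' l'
  have h13 : M13 N R * M13 N Rinv = 1 := by rw [M13_mul_M13, hdel, M13_id]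
  have h13' : M13 N Rinv * M13 N R = 1 := by rw [M13_mul_M13, hdel', M13_id]
  have h23 : M23 N R * M23 N Rinv = 1 := by rw [M23_mul_M23, hdel, M23_id]
  have h23' : M23 N Rinv * M23 N R = 1 := by rw [M23_mul_M23, hdel', M23_id]
  -- the three Yang–Baxter-type matrix identities
  have yb_pp := ybA R hYB
  have yb_mm : M12 N R * M23 N Rinv * M13 N Rinv
      = M13 N Rinv * M23 N Rinv * M12 N R :=
    conj_trick (M12 N R) (M23 N R) (M13 N R) (M23 N Rinv) (M13 N Rinv)
      h23 h23' h13 h13' (ybC R hYB)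
  have yb_pm : M12 N R * M23 N (fun i j k l => R j i l k) * M13 N Rinv
      = M13 N Rinv * M23 N (fun i j k l => R j i l k) * M12 N R :=
    conj_trick2 (M12 N R) (M23 N (fun i j k l => R j i l k)) (M13 N R) (M13 N Rinv)
      h13 h13' (ybE R hYB)
  -- generator case
  have hgen : ∀ a b : Fin N,
      (Rh * Am Δ Lp Lp (tgen N R g gt f ft a b) = Bm Δ Lp Lp (tgen N R g gt f ft a b) * Rh) ∧
      (Rh * Am Δ Lm Lm (tgen N R g gt f ft a b) = Bm Δ Lm Lm (tgen N R g gt f ft a b) * Rh) ∧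
      (Rh * Am Δ Lp Lm (tgen N R g gt f ft a b) = Bm Δ Lm Lp (tgen N R g gt f ft a b) * Rh) := by
    intro a b
    have hAmpp : Am Δ Lp Lp (tgen N R g gt f ft a b)
        = Matrix.of fun p q => ∑ c, R a p.2 c q.2 * R c p.1 b q.1 := by
      ext ⟨k, l⟩ ⟨m, n⟩
      simp [Am, hΔ, map_sum, sw_tmul, entryF_apply, hLp]
    have hBmpp : Bm Δ Lp Lp (tgen N R g gt f ft a b)
        = Matrix.of fun p q => ∑ c, R a p.1 c q.1 * R c p.2 b q.2 := by
      ext ⟨k, l⟩ ⟨m, n⟩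
      simp [Bm, hΔ, map_sum, sw_tmul, entryF_apply, hLp]
    have hAmmm : Am Δ Lm Lm (tgen N R g gt f ft a b)
        = Matrix.of fun p q => ∑ c, Rinv p.2 a q.2 c * Rinv p.1 c q.1 b := by
      ext ⟨k, l⟩ ⟨m, n⟩
      simp [Am, hΔ, map_sum, sw_tmul, entryF_apply, hLm]
    have hBmmm : Bm Δ Lm Lm (tgen N R g gt f ft a b)
        = Matrix.of fun p q => ∑ c, Rinv p.1 a q.1 c * Rinv p.2 c q.2 b := by
      ext ⟨k, l⟩ ⟨m, n⟩
      simp [Bm, hΔ, map_sum, sw_tmul, entryF_apply, hLm]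
    have hAmpm : Am Δ Lp Lm (tgen N R g gt f ft a b)
        = Matrix.of fun p q => ∑ c, R a p.2 c q.2 * Rinv p.1 c q.1 b := by
      ext ⟨k, l⟩ ⟨m, n⟩
      simp [Am, hΔ, map_sum, sw_tmul, entryF_apply, hLp, hLm]
    have hBmmp : Bm Δ Lm Lp (tgen N R g gt f ft a b)
        = Matrix.of fun p q => ∑ c, Rinv p.1 a q.1 c * R c p.2 b q.2 := by
      ext ⟨k, l⟩ ⟨m, n⟩
      simp [Bm, hΔ, map_sum, sw_tmul, entryF_apply, hLp, hLm]
    refine ⟨?_, ?_, ?_⟩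
    · rw [hAmpp, hBmpp]
      ext ⟨i, j⟩ ⟨m, n⟩
      have := gen_case R (fun i j k l => R j i l k) (fun i j k l => R j i l k)
        (fun i j k l => R j i l k) (fun i j k l => R j i l k) yb_pp i j m n a b
      simpa [Matrix.mul_apply, Fintype.sum_prod_type, hRh] using this
    · rw [hAmmm, hBmmm]
      ext ⟨i, j⟩ ⟨m, n⟩
      have := gen_case R (fun i j k l => Rinv i j k l) (fun i j k l => Rinv i j k l)
        (fun i j k l => Rinv i j k l) (fun i j k l => Rinv i j k l) (by simpa using yb_mm)
        i j m n a b
      simpa [Matrix.mul_apply, Fintype.sum_prod_type, hRh] using this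
    · rw [hAmpm, hBmmp]
      ext ⟨i, j⟩ ⟨m, n⟩
      have := gen_case R (fun i j k l => R j i l k) (fun i j k l => Rinv i j k l)
        (fun i j k l => Rinv i j k l) (fun i j k l => R j i l k) (by simpa using yb_pm)
        i j m n a b
      simpa [Matrix.mul_apply, Fintype.sum_prod_type, hRh] using this
  -- induction over the free algebra
  intro u
  obtain ⟨x, rfl⟩ := RingQuot.mkAlgHom_surjective ℂ (ARgfRel N R g gt f ft) u
  induction x using FreeAlgebra.induction with
  | grade0 r =>
    rw [AlgHom.commutes]
    exact ⟨closure_algebraMap Rh Δ Lp Lp Lp Lp r, closure_algebraMap Rh Δ Lm Lm Lm Lm r,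
      closure_algebraMap Rh Δ Lp Lm Lm Lp r⟩
  | grade1 w =>
    obtain ⟨a, b⟩ := w
    exact hgen a b
  | mul x y hx hy =>
    rw [map_mul]
    exact ⟨closure_mul Rh Δ Lp Lp Lp Lp _ _ hx.1 hy.1,
      closure_mul Rh Δ Lm Lm Lm Lm _ _ hx.2.1 hy.2.1,
      closure_mul Rh Δ Lp Lm Lm Lp _ _ hx.2.2 hy.2.2⟩
  | add x y hx hy =>
    rw [map_add]
    exact ⟨closure_add Rh Δ Lp Lp Lp Lp _ _ hx.1 hy.1,
      closure_add Rh Δ Lm Lm Lm Lm _ _ hx.2.1 hy.2.1,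
      closure_add Rh Δ Lp Lm Lm Lp _ _ hx.2.2 hy.2.2⟩
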